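/- There exists n₀ such that for every integer n ≥ n₀, every prime Δ with 2 ≤ Δ ≤ n⁴, every set V of fewer than n² {0,1}-vectors in (ZMod Δ)ⁿ, and every integer k with √n ≤ k ≤ n, the number of {0,1}-vectors v ∈ (ZMod Δ)ⁿ for which there exists a subset W ⊆ V with 1 ≤ |W| ≤ ⌊k/(22·log₂ k)⌋ such that the restriction of v to its last k coordinates lies in the (ZMod Δ)-linear span of the restrictions of the vectors of W to their last k coordinates, is at most 2^(n − k/6). -/

import Mathlib

/-- The restriction of a vector `v ∈ (ZMod Δ)ⁿ` to its last `k` coordinates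
(coordinates `n-k, …, n-1`). -/
def lastCoords {α : Type*} (n k : ℕ) (hk : k ≤ n) (v : Fin n → α) : Fin k → α :=
  fun i => v ⟨n - k + i.1, by omega⟩

/-!
A counted vector `v` is determined by its first `n - k` coordinates, which are `0` or `1`, and by
`π_k(v)`, which lies in the span of `π_k(W)` for one of at most `m (|V| + 1)^m` sets `W`, where
`m = ⌊k / (22 log₂ k)⌋`; such a span has at most `Δ^m` elements. With `|V| < n²`, `Δ ≤ n⁴` and
`n ≤ k²` the count is at most `2^(n-k) k^(13m) ≤ 2^(n-k) 2^(13k/22)`, since `m log₂ k ≤ k/22`.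
-/

open Finset

theorem Submodule.ncard_span_le {R M : Type*} [Semiring R] [Finite R] [AddCommMonoid M]
    [Module R M] {s : Set M} (hs : s.Finite) :
    (span R s : Set M).ncard ≤ Nat.card R ^ s.ncard := by
  have := hs.fintype
  have hrange : (span R s : Set M) = Set.range (Fintype.linearCombination R ((↑) : s → M)) := by
    rw [← LinearMap.coe_range, Fintype.range_linearCombination, Subtype.range_coe]
  rw [hrange, ← Nat.card_coe_set_eq, ← Nat.card_coe_set_eq s, ← Nat.card_fun]
  exact Finite.card_range_le _

theorem ncard_zeroOne_le {α ι : Type*} [Zero α] [One α] [Finite ι] :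
    {u : ι → α | ∀ i, u i = 0 ∨ u i = 1}.ncard ≤ 2 ^ Nat.card ι := by
  have hsub : {u : ι → α | ∀ i, u i = 0 ∨ u i = 1} ⊆
      Set.range (fun b : ι → Bool => fun i => bif b i then (1 : α) else 0) := by
    intro u hu
    classical
    refine ⟨fun i => decide (u i ≠ 0), funext fun i => ?_⟩
    by_cases h : u i = 0
    · simp [h]
    · simpa [h] using ((hu i).resolve_left h).symm
  calc _ ≤ (Set.range (fun b : ι → Bool => fun i => bif b i then (1 : α) else 0)).ncard :=
        Set.ncard_le_ncard hsub (Set.finite_range _)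
    _ ≤ Nat.card (ι → Bool) := by rw [← Nat.card_coe_set_eq]; exact Finite.card_range_le _
    _ = 2 ^ Nat.card ι := by simp [Nat.card_fun]

theorem ncard_zeroOne_lastCoords_mem_le {α : Type*} [Zero α] [One α] [Finite α] {n k : ℕ}
    (hk : k ≤ n) (T : Set (Fin k → α)) :
    {v : Fin n → α | (∀ i, v i = 0 ∨ v i = 1) ∧ lastCoords n k hk v ∈ T}.ncard
      ≤ 2 ^ (n - k) * T.ncard := by
  let split (v : Fin n → α) : (Fin (n - k) → α) × (Fin k → α) :=
    (fun i => v (Fin.castLE (Nat.sub_le n k) i), lastCoords n k hk v)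
  have hsplit : Function.Injective split := by
    intro u v huv
    simp only [split, Prod.mk.injEq] at huv
    funext i
    by_cases hi : i.1 < n - k
    · exact congrFun huv.1 ⟨i, hi⟩
    · have h := congrFun huv.2 ⟨i - (n - k), by omega⟩
      simp only [lastCoords] at h
      convert h using 3 <;> omega
  calc _ ≤ ({u : Fin (n - k) → α | ∀ i, u i = 0 ∨ u i = 1} ×ˢ T).ncard :=
        Set.ncard_le_ncard_of_injOn split (fun v hv => ⟨fun i => hv.1 _, hv.2⟩)
          hsplit.injOn (Set.toFinite _)
    _ ≤ 2 ^ (n - k) * T.ncard := by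
        rw [Set.ncard_prod]
        gcongr
        simpa using ncard_zeroOne_le (α := α) (ι := Fin (n - k))

theorem ncard_zeroOne_lastCoords_mem_span_le {R : Type*} [Semiring R] [Finite R] {n k : ℕ}
    (hk : k ≤ n) (W : Finset (Fin n → R)) :
    {v : Fin n → R | (∀ i, v i = 0 ∨ v i = 1) ∧
        lastCoords n k hk v ∈ Submodule.span R (lastCoords n k hk '' (W : Set (Fin n → R)))}.ncard
      ≤ 2 ^ (n - k) * Nat.card R ^ #W := by
  refine (ncard_zeroOne_lastCoords_mem_le hk _).trans (Nat.mul_le_mul_left _ ?_)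
  calc _ ≤ Nat.card R ^ (lastCoords n k hk '' (W : Set (Fin n → R))).ncard :=
        Submodule.ncard_span_le (W.finite_toSet.image _)
    _ ≤ Nat.card R ^ #W :=
        Nat.pow_le_pow_right Nat.card_pos ((Set.ncard_image_le W.finite_toSet).trans
          (Set.ncard_coe_finset W).le)

theorem card_filter_powerset_card_le {α : Type*} [DecidableEq α] (V : Finset α) (m : ℕ) :
    #{W ∈ V.powerset | 1 ≤ #W ∧ #W ≤ m} ≤ m * (#V + 1) ^ m := by
  have hsub : {W ∈ V.powerset | 1 ≤ #W ∧ #W ≤ m} ⊆ (Icc 1 m).biUnion (powersetCard · V) := by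
    intro W hW
    simp only [mem_filter, mem_powerset] at hW
    exact mem_biUnion.2 ⟨#W, mem_Icc.2 hW.2, by simpa using hW.1⟩
  calc _ ≤ ∑ s ∈ Icc 1 m, #(powersetCard s V) := (card_le_card hsub).trans card_biUnion_le
    _ ≤ ∑ s ∈ Icc 1 m, (#V + 1) ^ m := by
        refine sum_le_sum fun s hs => ?_
        rw [card_powersetCard]
        calc (#V).choose s ≤ #V ^ s := Nat.choose_le_pow _ _
          _ ≤ (#V + 1) ^ s := Nat.pow_le_pow_left (Nat.le_succ _) _
          _ ≤ (#V + 1) ^ m := Nat.pow_le_pow_right (Nat.succ_pos _) (mem_Icc.1 hs).2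
    _ = m * (#V + 1) ^ m := by simp

theorem ncard_zeroOne_lastCoords_mem_span_subset_le {R : Type*} [Semiring R] [Finite R]
    {n k : ℕ} (hk : k ≤ n) (V : Finset (Fin n → R)) (m : ℕ) :
    {v : Fin n → R | (∀ i, v i = 0 ∨ v i = 1) ∧ ∃ W ⊆ V, 1 ≤ #W ∧ #W ≤ m ∧
        lastCoords n k hk v ∈ Submodule.span R (lastCoords n k hk '' (W : Set (Fin n → R)))}.ncard
      ≤ m * (#V + 1) ^ m * (2 ^ (n - k) * Nat.card R ^ m) := by
  classical
  set S : Finset (Fin n → R) → Set (Fin n → R) := fun W => {v | (∀ i, v i = 0 ∨ v i = 1) ∧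
        lastCoords n k hk v ∈ Submodule.span R (lastCoords n k hk '' (W : Set (Fin n → R)))}
  have hsub : {v : Fin n → R | (∀ i, v i = 0 ∨ v i = 1) ∧ ∃ W ⊆ V, 1 ≤ #W ∧ #W ≤ m ∧
        lastCoords n k hk v ∈ Submodule.span R (lastCoords n k hk '' (W : Set (Fin n → R)))}
      ⊆ ⋃ W ∈ {W ∈ V.powerset | 1 ≤ #W ∧ #W ≤ m}, S W := by
    rintro v ⟨h01, W, hWV, hW1, hWm, hspan⟩
    exact Set.mem_biUnion (by simp [hWV, hWm, ← card_pos]; omega) ⟨h01, hspan⟩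
  calc _ ≤ ∑ W ∈ {W ∈ V.powerset | 1 ≤ #W ∧ #W ≤ m}, (S W).ncard :=
        (Set.ncard_le_ncard hsub (Set.toFinite _)).trans (set_ncard_biUnion_le _ _)
    _ ≤ #{W ∈ V.powerset | 1 ≤ #W ∧ #W ≤ m} * (2 ^ (n - k) * Nat.card R ^ m) := by
        refine sum_le_card_nsmul _ _ _ fun W hW => ?_
        refine (ncard_zeroOne_lastCoords_mem_span_le hk W).trans ?_
        gcongr
        · exact Nat.card_pos
        · exact (mem_filter.1 hW).2.2
    _ ≤ m * (#V + 1) ^ m * (2 ^ (n - k) * Nat.card R ^ m) := by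
        gcongr
        exact card_filter_powerset_card_le V m

theorem pos_and_floor_div_mul_le_of_floor_div_pos {x y : ℝ} (hx : 0 ≤ x) (hm : 0 < ⌊x / y⌋₊) :
    0 < y ∧ ⌊x / y⌋₊ * y ≤ x := by
  have hxy : 1 ≤ x / y := Nat.floor_pos.1 hm
  have hy : 0 < y := by
    by_contra! hy
    linarith [div_nonpos_of_nonneg_of_nonpos hx hy]
  exact ⟨hy, (le_div_iff₀ hy).1 (Nat.floor_le (by positivity))⟩

theorem two_pow_sub_mul_pow_le {n k m : ℕ} (hk : k ≤ n)
    (hmk : m * Real.logb 2 k ≤ k / 22) (hk0 : 0 < k) :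
    (2 : ℝ) ^ (n - k) * (k : ℝ) ^ (13 * m) ≤ 2 ^ ((n : ℝ) - k / 6) := by
  have hpow : (k : ℝ) ^ (13 * m) = 2 ^ (13 * (m * Real.logb 2 k)) := by
    rw [← Real.rpow_natCast, ← Real.rpow_logb two_pos (by norm_num) (Nat.cast_pos.2 hk0),
      ← Real.rpow_mul two_pos.le, Real.logb_rpow two_pos (by norm_num)]
    push_cast; ring_nf
  calc (2 : ℝ) ^ (n - k) * (k : ℝ) ^ (13 * m)
      = 2 ^ ((n : ℝ) - k + 13 * (m * Real.logb 2 k)) := by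
        rw [hpow, Real.rpow_add two_pos, ← Nat.cast_sub hk, Real.rpow_natCast]
    _ ≤ 2 ^ ((n : ℝ) - k / 6) := by
        gcongr
        · norm_num
        · linarith [(Nat.cast_nonneg k : (0 : ℝ) ≤ k)]

theorem stmt3 :
    ∃ n₀ : ℕ, ∀ n : ℕ, n₀ ≤ n → ∀ Δ : ℕ, Δ.Prime → 2 ≤ Δ → (Δ : ℝ) ≤ (n : ℝ)^4 →
      ∀ V : Finset (Fin n → ZMod Δ),
        (∀ v ∈ V, ∀ i, v i = 0 ∨ v i = 1) →
        V.card < n^2 →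
        ∀ k : ℕ, Real.sqrt n ≤ (k : ℝ) → ∀ hk : k ≤ n,
          ({v : Fin n → ZMod Δ | (∀ i, v i = 0 ∨ v i = 1) ∧
              ∃ W ⊆ V, 1 ≤ W.card ∧ W.card ≤ ⌊(k : ℝ) / (22 * Real.logb 2 k)⌋₊ ∧
                lastCoords n k hk v ∈
                  Submodule.span (ZMod Δ)
                    (lastCoords n k hk '' (W : Set (Fin n → ZMod Δ)))}.ncard : ℝ)
            ≤ 2 ^ ((n : ℝ) - (k : ℝ) / 6) := by
  refine ⟨0, fun n _ Δ _ hΔ2 hΔn V _ hV k hkn hk => ?_⟩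
  have : NeZero Δ := ⟨by omega⟩
  set m := ⌊(k : ℝ) / (22 * Real.logb 2 k)⌋₊
  have hcount := ncard_zeroOne_lastCoords_mem_span_subset_le hk V m
  rw [Nat.card_zmod] at hcount
  rcases Nat.eq_zero_or_pos m with hm0 | hm0
  · rw [Nat.le_zero.1 (hcount.trans_eq (by simp [hm0])), Nat.cast_zero]
    positivity
  obtain ⟨hlogb, hmk⟩ := pos_and_floor_div_mul_le_of_floor_div_pos (Nat.cast_nonneg k) hm0
  have hk2 : 2 ≤ k := by
    by_contra! hk2
    interval_cases k <;> simp at hlogb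
  have hnk : n ≤ k ^ 2 := by exact_mod_cast (Real.sqrt_le_left (Nat.cast_nonneg k)).1 hkn
  have hΔ : Δ ≤ n ^ 4 := by exact_mod_cast hΔn
  have hm_le : m ≤ k ^ m := Nat.lt_two_pow_self.le.trans (Nat.pow_le_pow_left hk2 m)
  have hcount' : m * (#V + 1) ^ m * (2 ^ (n - k) * Δ ^ m) ≤ 2 ^ (n - k) * k ^ (13 * m) :=
    calc m * (#V + 1) ^ m * (2 ^ (n - k) * Δ ^ m)
        ≤ k ^ m * ((k ^ 2) ^ 2) ^ m * (2 ^ (n - k) * ((k ^ 2) ^ 4) ^ m) := by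
          gcongr
          · exact hV.trans_le (Nat.pow_le_pow_left hnk 2)
          · exact hΔ.trans (Nat.pow_le_pow_left hnk 4)
      _ = 2 ^ (n - k) * k ^ (13 * m) := by ring
  calc _ ≤ ((2 ^ (n - k) * k ^ (13 * m) : ℕ) : ℝ) := by exact_mod_cast hcount.trans hcount'
    _ ≤ _ := by
        push_cast
        exact two_pow_sub_mul_pow_le hk (by linarith) (by omega)
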